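/- arXiv:1810.12190 — 2 statements merged into one kernel-verified Lean document; each statement's English description precedes it below -/
import Mathlib

section
/- (Semantic array-view split) Fix a type T. For all integers n ≥ 0 and 0 ≤ i ≤ n and every address ℓ, if a state ST satisfies arrayView(T, n, ℓ), then there exist states ST₁ and ST₂ with disjoint domains such that ST = ST₁⊗ST₂, ST₁ satisfies arrayView(T, i, ℓ), and ST₂ satisfies arrayView(T, n−i, ℓ+i). -/
namespace ArrayViewSem

/-- A state: a (partial, finite-in-practice) map from addresses (naturals) to closed values.
`Val` is the type of closed values. -/
def State (Val : Type) := ℕ → Option Val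

variable {Val : Type}

/-- The empty state `[]`. -/
def emptyS : State Val := fun _ => none

/-- The singleton state `[ℓ ↦ v]`. -/
def single (l : ℕ) (v : Val) : State Val := fun a => if a = l then some v else none

/-- Two states have disjoint domains. -/
def Disj (s1 s2 : State Val) : Prop := ∀ a, s1 a = none ∨ s2 a = none

/-- The union `ST₁ ⊗ ST₂` of two states (intended to be used when domains are disjoint). -/
def union (s1 s2 : State Val) : State Val := fun a => (s1 a).orElse (fun _ => s2 a)

/-- `ST ⊨ arrayView(T, n, ℓ)` where `good v` expresses that `v` is a closed value of the
fixed type `T`:  `ST ⊨ arrayView(T,0,ℓ)` iff `ST = []`, and `ST ⊨ arrayView(T,n+1,ℓ)` iff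
`ST = ST′ ⊗ ST″` with `ST′ ⊨ T@ℓ` (a singleton `[ℓ ↦ v]` with `v` of type `T`) and
`ST″ ⊨ arrayView(T,n,ℓ+1)`. -/
inductive ArrayView (good : Val → Prop) : ℕ → ℕ → State Val → Prop
  | nil (ℓ : ℕ) : ArrayView good 0 ℓ emptyS
  | cons {n ℓ : ℕ} {v : Val} {ST : State Val} :
      good v → Disj (single ℓ v) ST → ArrayView good n (ℓ + 1) ST →
      ArrayView good (n + 1) ℓ (union (single ℓ v) ST)

end ArrayViewSem

namespace ArrayViewSem

variable {Val : Type}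

lemma union_apply_eq_none {a b : State Val} {x : ℕ} :
    union a b x = none ↔ a x = none ∧ b x = none := by
  simp only [union]
  cases a x <;> simp

lemma union_assoc (a b c : State Val) : union (union a b) c = union a (union b c) := by
  funext x
  simp only [union]
  cases a x <;> rfl

lemma disj_emptyS (s : State Val) : Disj emptyS s := fun _ => Or.inl rfl

lemma Disj.union_left {a b c : State Val} (hac : Disj a c) (hbc : Disj b c) :
    Disj (union a b) c := fun x =>
  (hac x).elim (fun ha => (hbc x).imp (fun hb => union_apply_eq_none.2 ⟨ha, hb⟩) id) Or.inr

lemma Disj.of_union_right {a b c : State Val} (h : Disj a (union b c)) :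
    Disj a b ∧ Disj a c :=
  ⟨fun x => (h x).imp_right fun hbc => (union_apply_eq_none.1 hbc).1,
    fun x => (h x).imp_right fun hbc => (union_apply_eq_none.1 hbc).2⟩

-- Written with `k + i` rather than `n - i`: then `k + (i + 1)` is definitionally a successor,
-- so the head cell can be peeled off by `cases` and handed to the left part.
lemma ArrayView.split_add {good : Val → Prop} {ℓ k : ℕ} (i : ℕ) {ST : State Val}
    (hST : ArrayView good (k + i) ℓ ST) :
    ∃ ST1 ST2, Disj ST1 ST2 ∧ ST = union ST1 ST2 ∧
      ArrayView good i ℓ ST1 ∧ ArrayView good k (ℓ + i) ST2 := by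
  induction i generalizing ℓ ST with
  | zero => exact ⟨emptyS, ST, disj_emptyS ST, rfl, .nil ℓ, hST⟩
  | succ i ih =>
    rcases hST with _ | @⟨_, _, v, ST, hv, hdisj, htail⟩
    obtain ⟨ST1, ST2, h12, rfl, h1, h2⟩ := ih htail
    obtain ⟨hv1, hv2⟩ := hdisj.of_union_right
    refine ⟨union (single ℓ v) ST1, ST2, hv2.union_left h12, (union_assoc _ _ _).symm,
      .cons hv hv1 h1, ?_⟩
    rwa [Nat.add_right_comm] at h2

/-- **Semantic array-view split** (the semantic content of `splitLemma`):
if `ST ⊨ arrayView(T, n, ℓ)` and `0 ≤ i ≤ n`, then `ST` splits as a disjoint union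
`ST = ST₁ ⊗ ST₂` with `ST₁ ⊨ arrayView(T, i, ℓ)` and `ST₂ ⊨ arrayView(T, n−i, ℓ+i)`. -/
theorem arrayView_split {Val : Type} (good : Val → Prop) (n i ℓ : ℕ) (hin : i ≤ n)
    (ST : State Val) (hST : ArrayView good n ℓ ST) :
    ∃ ST1 ST2 : State Val, Disj ST1 ST2 ∧ ST = union ST1 ST2 ∧
      ArrayView good i ℓ ST1 ∧ ArrayView good (n - i) (ℓ + i) ST2 := by
  obtain ⟨k, rfl⟩ : ∃ k, n = k + i := ⟨n - i, (Nat.sub_add_cancel hin).symm⟩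
  rw [Nat.add_sub_cancel]
  exact ArrayView.split_add i hST

end ArrayViewSem
end

section
/- (Semantic list-segment concatenation) Fix a type T of list elements. For all integers n₁, n₂ ≥ 0 and addresses ℓ₁, ℓ₂, ℓ₃, if states ST₁ and ST₂ have disjoint domains, ST₁ satisfies slsegView(T, n₁, ℓ₁, ℓ₂), and ST₂ satisfies slsegView(T, n₂, ℓ₂, ℓ₃), then ST₁⊗ST₂ satisfies slsegView(T, n₁+n₂, ℓ₁, ℓ₃). -/
namespace SlsegSem

/-- A state: a (partial) map from addresses (naturals, with a distinguished null address)
to closed values. `Val` is the type of closed values. -/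
def State (Val : Type) := ℕ → Option Val

variable {Val : Type}

/-- The empty state `[]`. -/
def emptyS : State Val := fun _ => none

/-- The singleton state `[ℓ ↦ v]`. -/
def single (l : ℕ) (v : Val) : State Val := fun a => if a = l then some v else none

/-- Two states have disjoint domains. -/
def Disj (s1 s2 : State Val) : Prop := ∀ a, s1 a = none ∨ s2 a = none

/-- The union `ST₁ ⊗ ST₂` of two states (intended for disjoint domains). -/
def union (s1 s2 : State Val) : State Val := fun a => (s1 a).orElse (fun _ => s2 a)

/-- The two-address state of a list cell at `ℓ`: `[ℓ ↦ v, ℓ+1 ↦ p]`, storing the element `v`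
and the next-pointer `p`; this is `ST ⊨ (T, ptr(next))@ℓ` when `v` has type `T` and
`p = ptrV next`. -/
def cell (ℓ : ℕ) (v p : Val) : State Val := union (single ℓ v) (single (ℓ + 1) p)

/-- `ST ⊨ slsegView(T, n, first, last)`, the recursive stateful view of singly-linked list
segments, where `good v` expresses that `v` is a closed value of the element type `T`,
`ptrV a` is the pointer value for address `a`, and `null` is the distinguished null address:
`ST ⊨ slsegView(T,0,ℓ,ℓ′)` iff `ST = []` and `ℓ = ℓ′`; and `ST ⊨ slsegView(T,n+1,first,last)`
iff `first ≠ null` and `ST = ST′ ⊗ ST″` for some address `next` with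
`ST′ ⊨ (T, ptr(next))@first` and `ST″ ⊨ slsegView(T,n,next,last)`. -/
inductive Slseg (good : Val → Prop) (ptrV : ℕ → Val) (null : ℕ) :
    ℕ → ℕ → ℕ → State Val → Prop
  | nil (ℓ : ℕ) : Slseg good ptrV null 0 ℓ ℓ emptyS
  | cons {n first next last : ℕ} {v : Val} {ST : State Val} :
      first ≠ null → good v →
      Disj (cell first v (ptrV next)) ST →
      Slseg good ptrV null n next last ST →
      Slseg good ptrV null (n + 1) first last (union (cell first v (ptrV next)) ST)

theorem union_emptyS (s : State Val) : union (emptyS : State Val) s = s := by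
  funext a; simp [union, emptyS]

theorem union_assoc (s1 s2 s3 : State Val) :
    union (union s1 s2) s3 = union s1 (union s2 s3) := by
  funext a; simp [union]; cases s1 a <;> simp

/-- **Semantic list-segment concatenation**: if `ST₁ ⊨ slsegView(T, n₁, ℓ₁, ℓ₂)` and
`ST₂ ⊨ slsegView(T, n₂, ℓ₂, ℓ₃)` with disjoint domains, then
`ST₁ ⊗ ST₂ ⊨ slsegView(T, n₁+n₂, ℓ₁, ℓ₃)` (the disjointness of the domains supplies the
proviso mentioned in the statement). -/
theorem slseg_concat (good : Val → Prop) (ptrV : ℕ → Val) (null : ℕ)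
    (n1 n2 ℓ1 ℓ2 ℓ3 : ℕ) (ST1 ST2 : State Val) (hdisj : Disj ST1 ST2)
    (h1 : Slseg good ptrV null n1 ℓ1 ℓ2 ST1)
    (h2 : Slseg good ptrV null n2 ℓ2 ℓ3 ST2) :
    Slseg good ptrV null (n1 + n2) ℓ1 ℓ3 (union ST1 ST2) := by
  induction h1 generalizing ST2 with
  | nil ℓ =>
      simpa [Nat.zero_add, union_emptyS] using h2
  | cons hne hg hd hrest ih =>
      rename_i n first next last v ST
      have hd1 : Disj (cell first v (ptrV next)) ST2 := fun a => by
        rcases hdisj a with h | h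
        · left
          have := h
          simp [union] at this
          exact this.1
        · right; exact h
      have hd2 : Disj ST ST2 := fun a => by
        rcases hdisj a with h | h
        · left
          simp [union] at h
          cases hc : cell first v (ptrV next) a <;> simp [hc] at h
          exact h
        · right; exact h
      have hd3 : Disj (cell first v (ptrV next)) (union ST ST2) := fun a => by
        rcases hd a with h | h
        · rcases hd1 a with h' | h'
          · left; exact h
          · left; exact h
        · rcases hd1 a with h' | h'
          · left; exact h'
          · right; simp [union, h, h']
      rw [union_assoc, Nat.add_right_comm]
      exact Slseg.cons hne hg hd3 (ih ST2 hd2 h2)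

end SlsegSem
end
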